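/- arXiv:math/9807121 — 4 statements merged into one kernel-verified Lean document; each statement's English description precedes it below -/
import Mathlib

section
/- Let $A$ be an $n \times n$ complex matrix. Then $A$ is Hermitian positive semidefinite and every entry of $A$ has modulus $1$ or $0$ if and only if there exists a unitary monomial matrix $P$ such that $P^{-1} A P$ is a direct sum of all-$1$'s matrices and a zero matrix, i.e., there is a partition of the index set $\{1,\dots,n\}$ into blocks $S_1, \dots, S_k, S_0$ such that $(P^{-1}AP)_{ij} = 1$ if $i$ and $j$ lie in the same block $S_m$ with $m \geq 1$, and $(P^{-1}AP)_{ij} = 0$ otherwise. -/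
/-!
Write the positive semidefinite matrix `A` as a Gram matrix `A i j = ⟪v i, v j⟫`. Its diagonal
forces every `v i` to be `0` or a unit vector, and an off-diagonal entry of modulus one is the
equality case of Cauchy–Schwarz, so then `v j = A i j • v i`. Hence `A i j ≠ 0` is an equivalence
relation on the nonzero vectors, vectors in different classes are orthogonal, and rescaling every
vector of a class to a common representative turns `A` into a direct sum of all-ones blocks and a
zero block. Conversely such a block matrix is itself a Gram matrix (of standard basis vectors), and
conjugating by a unitary monomial matrix preserves positivity and the moduli of the entries.
-/

open scoped ComplexOrder Matrix InnerProductSpace ComplexConjugate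

open Matrix MatrixOrder

theorem RCLike.conj_mul_self_of_norm_eq_one {𝕜 : Type*} [RCLike 𝕜] {z : 𝕜} (hz : ‖z‖ = 1) :
    conj z * z = 1 := by
  rw [RCLike.conj_mul, hz]
  simp

theorem eq_inner_smul_of_norm_inner_eq_one {𝕜 E : Type*} [RCLike 𝕜] [NormedAddCommGroup E]
    [InnerProductSpace 𝕜 E] {x y : E} (hx : ‖x‖ = 1) (hy : ‖y‖ = 1) (hxy : ‖⟪x, y⟫_𝕜‖ = 1) :
    y = ⟪x, y⟫_𝕜 • x := by
  have hx₀ : x ≠ 0 := norm_ne_zero_iff.mp (by rw [hx]; exact one_ne_zero)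
  have hy₀ : y ≠ 0 := norm_ne_zero_iff.mp (by rw [hy]; exact one_ne_zero)
  obtain ⟨r, -, rfl⟩ :=
    (norm_inner_eq_norm_iff (𝕜 := 𝕜) hx₀ hy₀).mp (by rw [hx, hy, hxy, one_mul])
  rw [inner_smul_right, inner_self_eq_norm_sq_to_K, hx]
  simp

namespace Matrix

variable {ι 𝕜 : Type*} [RCLike 𝕜]

def blockOnes (c : ι → ℕ) : Matrix ι ι 𝕜 :=
  of fun i j => if c i = c j ∧ c i ≠ 0 then 1 else 0

theorem posSemidef_blockOnes [Finite ι] (c : ι → ℕ) :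
    (blockOnes c : Matrix ι ι 𝕜).PosSemidef := by
  have := Fintype.ofFinite ι
  classical
  let v : ι → EuclideanSpace 𝕜 (Set.range c) := fun i =>
    if c i = 0 then 0 else EuclideanSpace.single ⟨c i, i, rfl⟩ 1
  convert posSemidef_gram 𝕜 v
  ext i j
  by_cases hi : c i = 0 <;> by_cases hj : c j = 0 <;>
    simp [blockOnes, v, hi, hj, EuclideanSpace.inner_single_left, Subtype.ext_iff, eq_comm]

theorem IsHermitian.apply_ne_zero {A : Matrix ι ι 𝕜} (hA : A.IsHermitian) {i j : ι}
    (hij : A i j ≠ 0) : A j i ≠ 0 := by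
  rw [← hA.apply j i]
  exact star_ne_zero.mpr hij

variable [Fintype ι]

theorem PosSemidef.exists_eq_gram [DecidableEq ι] {A : Matrix ι ι 𝕜} (hA : A.PosSemidef) :
    ∃ v : ι → EuclideanSpace 𝕜 ι, A = gram 𝕜 v := by
  obtain ⟨B, rfl⟩ := CStarAlgebra.nonneg_iff_eq_star_mul_self.mp hA.nonneg
  exact ⟨fun j => WithLp.toLp 2 (fun k => B k j), by
    ext i j
    simp [mul_apply, PiLp.inner_apply, mul_comm]⟩

section UnimodularOrZero

variable {A : Matrix ι ι 𝕜} (hA : A.PosSemidef) (hmod : ∀ i j, ‖A i j‖ = 1 ∨ A i j = 0)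
include hA hmod

theorem PosSemidef.apply_eq_star_mul_of_ne_zero {i j : ι} (hij : A i j ≠ 0) (k : ι) :
    A j k = conj (A i j) * A i k := by
  classical
  obtain ⟨v, rfl⟩ := hA.exists_eq_gram
  have hv : ∀ l, ‖v l‖ = 0 ∨ ‖v l‖ = 1 := fun l => by
    have := hmod l l
    simp only [gram_apply, inner_self_eq_norm_sq_to_K, norm_pow, RCLike.norm_ofReal, abs_norm,
      pow_eq_one_iff_of_nonneg (norm_nonneg _) two_ne_zero, pow_eq_zero_iff two_ne_zero,
      RCLike.ofReal_eq_zero] at this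
    exact this.symm
  have hij1 : ‖⟪v i, v j⟫_𝕜‖ = 1 := (hmod i j).resolve_right hij
  have hcs : 1 ≤ ‖v i‖ * ‖v j‖ := hij1 ▸ norm_inner_le_norm (v i) (v j)
  have hvi : ‖v i‖ = 1 := (hv i).resolve_left fun h => by norm_num [h] at hcs
  have hvj : ‖v j‖ = 1 := (hv j).resolve_left fun h => by norm_num [h] at hcs
  simp only [gram_apply]
  conv_lhs => rw [eq_inner_smul_of_norm_inner_eq_one hvi hvj hij1, inner_smul_left]

theorem PosSemidef.apply_self_eq_one_of_ne_zero {i j : ι} (hij : A i j ≠ 0) : A j j = 1 := by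
  rw [hA.apply_eq_star_mul_of_ne_zero hmod hij,
    RCLike.conj_mul_self_of_norm_eq_one ((hmod i j).resolve_right hij)]

theorem PosSemidef.apply_eq_mul_star_of_ne_zero {i j m : ι} (him : A i m ≠ 0) :
    A i j = A i m * conj (A j m) := by
  rw [hA.apply_eq_star_mul_of_ne_zero hmod (hA.isHermitian.apply_ne_zero him),
    ← hA.isHermitian.apply j m, ← hA.isHermitian.apply i m]
  simp

/-- `A i j ≠ 0` is an equivalence relation on `{i | A i i ≠ 0}`; `rep` picks a member of each
class. -/
theorem PosSemidef.exists_rep : ∃ rep : ι → ι,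
    (∀ i, A i i ≠ 0 → A i (rep i) ≠ 0) ∧ ∀ i j, A i j ≠ 0 → rep i = rep j := by
  cases isEmpty_or_nonempty ι
  · exact ⟨id, fun i => isEmptyElim i, fun i => isEmptyElim i⟩
  refine ⟨fun i => Classical.epsilon (A i · ≠ 0),
    fun i hi => Classical.epsilon_spec (p := (A i · ≠ 0)) ⟨i, hi⟩,
    fun i j hij => congrArg _ (funext fun k => ?_)⟩
  simp [hA.apply_eq_star_mul_of_ne_zero hmod hij, hij]

theorem PosSemidef.exists_diagonal_conj_eq_blockOnes : ∃ d : ι → 𝕜, (∀ i, ‖d i‖ = 1) ∧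
    ∃ c : ι → ℕ, ∀ i j, conj (d i) * A i j * d j = blockOnes c i j := by
  classical
  obtain ⟨rep, hrep, hrep_eq⟩ := hA.exists_rep hmod
  have hrow : ∀ {i j}, A i i = 0 → A i j = 0 := fun {i j} hi => by
    by_contra hij
    simp [hA.apply_self_eq_one_of_ne_zero hmod (hA.isHermitian.apply_ne_zero hij)] at hi
  have hcol : ∀ {i j}, A j j = 0 → A i j = 0 := fun {i j} hj => by
    by_contra hij
    simp [hA.apply_self_eq_one_of_ne_zero hmod hij] at hj
  have hunit : ∀ {i j}, A i j ≠ 0 → conj (A i j) * A i j = 1 := fun {i j} hij =>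
    RCLike.conj_mul_self_of_norm_eq_one ((hmod i j).resolve_right hij)
  refine ⟨fun i => if A i i = 0 then 1 else A i (rep i), fun i => ?_,
    fun i => if A i i = 0 then 0 else Fintype.equivFin ι (rep i) + 1, fun i j => ?_⟩
  · dsimp only
    split_ifs with hi
    · exact norm_one
    · exact (hmod _ _).resolve_right (hrep i hi)
  by_cases hi : A i i = 0
  · simp [blockOnes, hi, hrow hi]
  by_cases hj : A j j = 0
  · simp [blockOnes, hj, hcol hj]
  by_cases hr : rep i = rep j
  · simp only [blockOnes, of_apply, hi, hj, hr, if_false, true_and, ne_eq, Nat.add_one_ne_zero,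
      not_false_eq_true, if_true]
    rw [hA.apply_eq_mul_star_of_ne_zero hmod (j := j) (hrep i hi), hr]
    calc conj (A i (rep j)) * (A i (rep j) * conj (A j (rep j))) * A j (rep j)
        = (conj (A i (rep j)) * A i (rep j)) * (conj (A j (rep j)) * A j (rep j)) := by ring
      _ = 1 := by rw [hunit (hr ▸ hrep i hi), hunit (hrep j hj), one_mul]
  · have hij : A i j = 0 := not_imp_comm.mp (hrep_eq i j) hr
    simp [blockOnes, hi, hj, hij, Fin.val_injective.ne ((Fintype.equivFin ι).injective.ne hr)]

end UnimodularOrZero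

variable [DecidableEq ι]

theorem inv_permMatrix_mul_diagonal {σ : Equiv.Perm ι} {d : ι → 𝕜} (hd : ∀ i, ‖d i‖ = 1) :
    (σ.permMatrix 𝕜 * diagonal d)⁻¹ = diagonal (star d) * σ⁻¹.permMatrix 𝕜 := by
  refine inv_eq_left_inv ?_
  rw [mul_assoc, ← mul_assoc (σ⁻¹.permMatrix 𝕜), ← permMatrix_mul, mul_inv_cancel, permMatrix_one,
    one_mul, diagonal_mul_diagonal]
  simp [RCLike.conj_mul_self_of_norm_eq_one (hd _)]

theorem inv_permMatrix_mul_diagonal_mul_mul_apply {σ : Equiv.Perm ι} {d : ι → 𝕜}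
    (hd : ∀ i, ‖d i‖ = 1) (A : Matrix ι ι 𝕜) (i j : ι) :
    ((σ.permMatrix 𝕜 * diagonal d)⁻¹ * A * (σ.permMatrix 𝕜 * diagonal d)) i j
      = conj (d i) * A (σ.symm i) (σ.symm j) * d j := by
  calc _ = (diagonal (star d) * (σ⁻¹.permMatrix 𝕜 * A * σ.permMatrix 𝕜) * diagonal d) i j := by
        simp only [inv_permMatrix_mul_diagonal hd, mul_assoc]
    _ = _ := by
        rw [mul_diagonal, diagonal_mul, PEquiv.toMatrix_toPEquiv_mul,
          PEquiv.mul_toMatrix_toPEquiv]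
        rfl

theorem posSemidef_and_norm_apply_of_conj_eq_blockOnes {A : Matrix ι ι 𝕜} (σ : Equiv.Perm ι)
    {d : ι → 𝕜} (hd : ∀ i, ‖d i‖ = 1) {c : ι → ℕ}
    (h : ∀ i j, conj (d i) * A (σ.symm i) (σ.symm j) * d j = blockOnes c i j) :
    A.PosSemidef ∧ ∀ i j, ‖A i j‖ = 1 ∨ A i j = 0 := by
  have hunit := fun i => RCLike.conj_mul_self_of_norm_eq_one (hd i)
  have hA : ∀ i j, A i j = d (σ i) * blockOnes c (σ i) (σ j) * conj (d (σ j)) := fun i j => by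
    rw [← h, σ.symm_apply_apply, σ.symm_apply_apply]
    calc A i j = (conj (d (σ i)) * d (σ i)) * A i j * (conj (d (σ j)) * d (σ j)) := by
          rw [hunit, hunit, one_mul, mul_one]
      _ = _ := by ring
  refine ⟨?_, fun i j => ?_⟩
  · have : A = (diagonal d * blockOnes c * (diagonal d)ᴴ).submatrix σ σ := by
      ext i j
      simp [hA, mul_diagonal, diagonal_mul]
    rw [this]
    exact ((posSemidef_blockOnes c).mul_mul_conjTranspose_same _).submatrix σ
  · rw [hA]
    simp only [blockOnes, of_apply]
    split_ifs <;> simp [hd]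

end Matrix

/-- A matrix `A ∈ ℂ^{n×n}` is Hermitian positive semidefinite with all entries of
modulus `1` or `0` iff there is a unitary monomial matrix `P = QD` (`Q` a permutation
matrix, `D` unitary diagonal) such that `P⁻¹ A P` is a direct sum of all-`1`'s blocks
and a zero block, encoded by a block labeling `c` where label `0` is the zero block. -/
theorem stmt0 (n : ℕ) (A : Matrix (Fin n) (Fin n) ℂ) :
    (A.PosSemidef ∧ ∀ i j, ‖A i j‖ = 1 ∨ A i j = 0) ↔
    ∃ (σ : Equiv.Perm (Fin n)) (d : Fin n → ℂ),
      (∀ i, ‖d i‖ = 1) ∧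
      ∃ c : Fin n → ℕ,
        ∀ i j, ((σ.permMatrix ℂ * Matrix.diagonal d)⁻¹ * A *
            (σ.permMatrix ℂ * Matrix.diagonal d)) i j
          = if c i = c j ∧ c i ≠ 0 then 1 else 0 := by
  constructor
  · rintro ⟨hA, hmod⟩
    obtain ⟨d, hd, c, hc⟩ := hA.exists_diagonal_conj_eq_blockOnes hmod
    refine ⟨1, d, hd, c, fun i j => ?_⟩
    rw [inv_permMatrix_mul_diagonal_mul_mul_apply hd]
    exact hc i j
  · rintro ⟨σ, d, hd, c, h⟩
    refine posSemidef_and_norm_apply_of_conj_eq_blockOnes σ hd (c := c) fun i j => ?_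
    rw [← inv_permMatrix_mul_diagonal_mul_mul_apply hd]
    exact h i j
end

section
/- If $A$ is an $n \times n$ positive semidefinite real symmetric matrix all of whose entries are $0$ or $1$, then $A$ is permutationally similar to a direct sum of matrices each of which is either an all-$1$'s matrix or a zero matrix; i.e., there is a permutation matrix $Q$ and a partition of the index set $\{1,\dots,n\}$ into blocks $S_1, \dots, S_k, S_0$ such that $(Q^{T}AQ)_{ij} = 1$ if $i$ and $j$ lie in the same block $S_m$ with $m \geq 1$, and $(Q^{T}AQ)_{ij} = 0$ otherwise. -/
/-!
The relation `A i j = 1` is a partial equivalence relation on the indices, by symmetry of `A`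
and nonnegativity of principal minors: the `2 × 2` minor
`A i i * A j j - A i j ^ 2 ≥ 0` forces `A i i = 1` once `A i j = 1`, and the `3 × 3` minor of
`[[1, 1, 0], [1, 1, 1], [0, 1, 1]]` equals `-1`, which rules out `A i j = A j k = 1`, `A i k = 0`.
Labelling each class by one plus its least code under an injection into `ℕ`, and the rest by `0`, gives the
block structure without any permutation.
-/

open scoped Matrix

theorem exists_nat_label_iff_of_symm_of_trans {α : Type*} [Countable α] {r : α → α → Prop}
    (symm : ∀ {i j}, r i j → r j i) (trans : ∀ {i j k}, r i j → r j k → r i k) :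
    ∃ c : α → ℕ, ∀ i j, r i j ↔ c i = c j ∧ c i ≠ 0 := by
  classical
  obtain ⟨f, hf⟩ := Countable.exists_injective_nat α
  let least (i : α) : ℕ := sInf (f '' {k | r k i})
  have least_mem {i} (hi : r i i) : ∃ k, r k i ∧ f k = least i :=
    Nat.sInf_mem (⟨f i, i, hi, rfl⟩ : (f '' {k | r k i}).Nonempty)
  refine ⟨fun i => if r i i then least i + 1 else 0, fun i j => ⟨fun hij => ?_, ?_⟩⟩
  · have hclass : {k | r k i} = {k | r k j} :=
      Set.ext fun k => ⟨fun hki => trans hki hij, fun hkj => trans hkj (symm hij)⟩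
    simp [trans hij (symm hij), trans (symm hij) hij, least, hclass]
  · rintro ⟨hc, hc0⟩
    have hi : r i i := by by_contra h; simp [h] at hc0
    have hj : r j j := by by_contra h; simp [hi, h] at hc
    simp only [hi, hj, if_true, add_left_inj] at hc
    obtain ⟨k, hki, hk⟩ := least_mem hi
    obtain ⟨k', hk'j, hk'⟩ := least_mem hj
    obtain rfl : k = k' := hf (hk.trans (hc.trans hk'.symm))
    exact trans (symm hki) hk'j

namespace Matrix.PosSemidef

variable {n : Type*} {A : Matrix n n ℝ}

theorem apply_symm (hA : A.PosSemidef) (i j : n) : A j i = A i j := by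
  simpa using hA.isHermitian.apply i j

theorem diag_eq_one_of_apply_eq_one (hA : A.PosSemidef) (h01 : ∀ i j, A i j = 0 ∨ A i j = 1)
    {i j : n} (hij : A i j = 1) : A i i = 1 := by
  have hji : A j i = 1 := (hA.apply_symm i j).trans hij
  refine (h01 i i).resolve_left fun hii => ?_
  have hminor := (hA.submatrix ![i, j]).det_nonneg
  rw [det_fin_two] at hminor
  norm_num [hii, hij, hji] at hminor

theorem apply_eq_one_trans (hA : A.PosSemidef) (h01 : ∀ i j, A i j = 0 ∨ A i j = 1)
    {i j k : n} (hij : A i j = 1) (hjk : A j k = 1) : A i k = 1 := by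
  have symm {a b : n} (h : A a b = 1) : A b a = 1 := (hA.apply_symm a b).trans h
  have hii := hA.diag_eq_one_of_apply_eq_one h01 hij
  have hjj := hA.diag_eq_one_of_apply_eq_one h01 hjk
  have hkk := hA.diag_eq_one_of_apply_eq_one h01 (symm hjk)
  refine (h01 i k).resolve_left fun hik => ?_
  have hminor := (hA.submatrix ![i, j, k]).det_nonneg
  rw [det_fin_three] at hminor
  simp [hii, hjj, hkk, hij, hjk, symm hij, symm hjk, hik, hA.apply_symm i k] at hminor
  norm_num at hminor

end Matrix.PosSemidef

/-- A positive semidefinite real symmetric `(0,1)`-matrix is permutationally similar to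
a direct sum of all-`1`'s blocks and a zero block, encoded by a block labeling `c`
where label `0` is the zero block. -/
theorem stmt1 (n : ℕ) (A : Matrix (Fin n) (Fin n) ℝ)
    (hA : A.PosSemidef) (h01 : ∀ i j, A i j = 0 ∨ A i j = 1) :
    ∃ (σ : Equiv.Perm (Fin n)) (c : Fin n → ℕ),
      ∀ i j, ((σ.permMatrix ℝ)ᵀ * A * σ.permMatrix ℝ) i j
        = if c i = c j ∧ c i ≠ 0 then 1 else 0 := by
  obtain ⟨c, hc⟩ := exists_nat_label_iff_of_symm_of_trans (r := fun i j => A i j = 1)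
    (fun {i j} h => (hA.apply_symm i j).trans h)
    (hA.apply_eq_one_trans h01)
  refine ⟨1, c, fun i j => ?_⟩
  rw [Matrix.permMatrix_one, Matrix.transpose_one, Matrix.one_mul, Matrix.mul_one]
  split_ifs with hlabel
  · exact (hc i j).2 hlabel
  · exact (h01 i j).resolve_right (mt (hc i j).1 hlabel)
end

section
/- A matrix $A \in \mathbb{C}^{n \times n}$ is an irreducible Hermitian positive semidefinite matrix all of whose nonzero entries have modulus $1$ if and only if there exists a unitary diagonal matrix $D$ (a diagonal matrix all of whose diagonal entries have modulus $1$) such that $D^{-1} A D$ is the $n \times n$ all-$1$'s matrix. -/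
/-!
Let `A` be positive semidefinite. A vector `x` with `x⋆ A x = 0` satisfies `A x = 0`. A zero
diagonal entry `A i i` makes `e i` such a vector, so column `i` vanishes; irreducibility rules this
out, and the diagonal is therefore `1`. Then for `‖A i j‖ = 1` the form at `e j - A i j • e i` is
`1 - ‖A i j‖ ^ 2 = 0`, so column `j` is `A i j` times column `i`. Hence the nonzero entries form a
transitive relation, irreducibility makes every entry nonzero, and `A = d d⋆` for `d` any column
of `A`. Conversely `d d⋆` is positive semidefinite with unimodular entries.
-/

open scoped ComplexOrder Matrix ComplexConjugate

lemma RCLike.eq_one_of_nonneg_of_norm_eq_one {𝕜 : Type*} [RCLike 𝕜] {z : 𝕜} (h0 : 0 ≤ z)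
    (h1 : ‖z‖ = 1) : z = 1 := by
  rw [← RCLike.norm_of_nonneg' h0, h1, RCLike.ofReal_one]

namespace Matrix

variable {𝕜 ι : Type*} [RCLike 𝕜] [Fintype ι] [DecidableEq ι] {A : Matrix ι ι 𝕜}

namespace PosSemidef

lemma apply_eq_zero_of_diag_eq_zero (hA : A.PosSemidef) {i : ι} (hi : A i i = 0) (k : ι) :
    A k i = 0 := by
  have hnull : A *ᵥ Pi.single i 1 = 0 := (hA.dotProduct_mulVec_zero_iff _).mp <| by
    simp [mulVec_single, hi]
  simpa [mulVec_single] using congrFun hnull k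

lemma apply_mul_apply_eq (hA : A.PosSemidef) {i j : ι} (hi : A i i = 1) (hj : A j j = 1)
    (hij : ‖A i j‖ = 1) (k : ι) : A k i * A i j = A k j := by
  have hji : A j i = conj (A i j) := (hA.1.apply j i).symm
  have hnorm : conj (A i j) * A i j = 1 := by simp [RCLike.conj_mul, hij]
  have hnull : A *ᵥ (Pi.single j 1 - Pi.single i (A i j)) = 0 :=
    (hA.dotProduct_mulVec_zero_iff _).mp <| by
      simp [mulVec_sub, mulVec_single, hi, hj, hji, hnorm]
  simpa [mulVec_sub, mulVec_single, sub_eq_zero, eq_comm, mul_comm] using congrFun hnull k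

variable (hA : A.PosSemidef) (hA1 : ∀ i j, A i j ≠ 0 → ‖A i j‖ = 1)
include hA hA1

lemma diag_eq_one {i k : ι} (hki : A k i ≠ 0) : A i i = 1 := by
  have hii : A i i ≠ 0 := fun h ↦ hki (hA.apply_eq_zero_of_diag_eq_zero h k)
  exact RCLike.eq_one_of_nonneg_of_norm_eq_one hA.diag_nonneg (hA1 i i hii)

lemma apply_ne_zero_of_transGen (hdiag : ∀ i, A i i = 1) {i j : ι}
    (hij : Relation.TransGen (fun a b ↦ A a b ≠ 0) i j) : A i j ≠ 0 := by
  induction hij with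
  | single h => exact h
  | tail _ hjk hij =>
    rw [← hA.apply_mul_apply_eq (hdiag _) (hdiag _) (hA1 _ _ hjk)]
    exact mul_ne_zero hij hjk

lemma exists_eq_vecMulVec_of_transGen
    (hconn : ∀ i j, Relation.TransGen (fun a b ↦ A a b ≠ 0) i j) :
    ∃ d : ι → 𝕜, (∀ i, ‖d i‖ = 1) ∧ A = vecMulVec d (star d) := by
  rcases isEmpty_or_nonempty ι with _ | ⟨⟨i₀⟩⟩
  · exact ⟨1, isEmptyElim, by ext i; exact isEmptyElim i⟩
  have hdiag : ∀ i, A i i = 1 := fun i ↦ by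
    obtain ⟨k, -, hki⟩ := Relation.TransGen.tail'_iff.mp (hconn i i)
    exact hA.diag_eq_one hA1 hki
  have hne : ∀ i j, A i j ≠ 0 := fun i j ↦ hA.apply_ne_zero_of_transGen hA1 hdiag (hconn i j)
  refine ⟨fun i ↦ A i i₀, fun i ↦ hA1 i i₀ (hne i i₀), ?_⟩
  ext i j
  rw [vecMulVec_apply, Pi.star_apply, hA.1.apply,
    hA.apply_mul_apply_eq (hdiag i₀) (hdiag j) (hA1 i₀ j (hne i₀ j))]

end PosSemidef

lemma inv_diagonal_mul_mul_diagonal_eq_const_one_iff {d : ι → 𝕜} (hd : ∀ i, ‖d i‖ = 1) :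
    (diagonal d)⁻¹ * A * diagonal d = of (fun _ _ ↦ 1) ↔ A = vecMulVec d (star d) := by
  have hd0 : ∀ i, d i ≠ 0 := fun i ↦ norm_ne_zero_iff.mp (by simp [hd])
  have hinv : (diagonal d)⁻¹ = diagonal d⁻¹ :=
    inv_eq_left_inv <| by simp [diagonal_mul_diagonal, hd0, ← diagonal_one]
  simp only [hinv, ← Matrix.ext_iff, diagonal_mul, mul_diagonal, of_apply, vecMulVec_apply,
    Pi.star_apply, Pi.inv_apply, RCLike.star_def, ← RCLike.inv_eq_conj (hd _)]
  refine forall₂_congr fun i j ↦ ?_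
  field_simp [hd0]

end Matrix

/-- A matrix is an irreducible Hermitian positive semidefinite matrix with all nonzero
entries of modulus `1` iff it is unitarily diagonally similar to the all-`1`'s matrix.
Irreducibility is stated as strong connectivity of the digraph with an edge `i → j`
whenever `A i j ≠ 0`. -/
theorem stmt7 (n : ℕ) (A : Matrix (Fin n) (Fin n) ℂ) :
    (A.PosSemidef ∧ (∀ i j, A i j ≠ 0 → ‖A i j‖ = 1) ∧
      ∀ i j : Fin n, Relation.TransGen (fun a b => A a b ≠ 0) i j) ↔
    ∃ d : Fin n → ℂ, (∀ i, ‖d i‖ = 1) ∧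
      (Matrix.diagonal d)⁻¹ * A * Matrix.diagonal d = Matrix.of fun _ _ => (1 : ℂ) := by
  constructor
  · rintro ⟨hA, hA1, hconn⟩
    obtain ⟨d, hd, rfl⟩ := hA.exists_eq_vecMulVec_of_transGen hA1 hconn
    exact ⟨d, hd, (Matrix.inv_diagonal_mul_mul_diagonal_eq_const_one_iff hd).mpr rfl⟩
  · rintro ⟨d, hd, hsim⟩
    obtain rfl := (Matrix.inv_diagonal_mul_mul_diagonal_eq_const_one_iff hd).mp hsim
    have hnorm : ∀ i j, ‖Matrix.vecMulVec d (star d) i j‖ = 1 := fun i j ↦ by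
      simp [Matrix.vecMulVec_apply, hd]
    exact ⟨Matrix.posSemidef_vecMulVec_self_star d, fun i j _ ↦ hnorm i j,
      fun i j ↦ .single (norm_ne_zero_iff.mp (by simp [hnorm]))⟩
end

section
/- Let $A \in \mathbb{C}^{n \times n}$ be a Hermitian positive semidefinite matrix all of whose nonzero entries have modulus $1$. Then there exists a lower triangular matrix $L \in \mathbb{C}^{n \times n}$ with $A = L L^*$ and a unitary diagonal matrix $D$ (a diagonal matrix all of whose diagonal entries have modulus $1$) such that $D^{-1} L D$ has all entries equal to $0$ or $1$. -/
/-!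
Positive semidefiniteness and unimodularity force `A i k = A i j * A j k` whenever `A i j ≠ 0`:
the diagonal entries on the support are `1`, so the quadratic form vanishes at
`eᵢ - A j i • eⱼ`, which therefore lies in the kernel. Hence `A i j ≠ 0` is an equivalence relation
on the indices with `A i i ≠ 0`, and each class `C` contributes a rank-one block `v vᴴ`, where `v` is
the column of `A` at the least index `r` of `C`, and `v` has unimodular entries on `C`. Keeping in
each row only its first nonzero entry yields the lower triangular factor, and conjugating by the
phases `A i r` turns it into a `0`–`1` matrix.
-/

open scoped ComplexOrder Matrix

namespace Matrix

variable {𝕜 n : Type*} [RCLike 𝕜] {A : Matrix n n 𝕜}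

theorem inv_diagonal_mul_mul_diagonal_apply {K : Type*} [Field K] [Fintype n] [DecidableEq n]
    {d : n → K} (hd : ∀ i, d i ≠ 0) (M : Matrix n n K) (i j : n) :
    ((diagonal d)⁻¹ * M * diagonal d) i j = (d i)⁻¹ * M i j * d j := by
  have hinv : (diagonal d)⁻¹ = diagonal fun i => (d i)⁻¹ :=
    inv_eq_left_inv (by simp [diagonal_mul_diagonal, inv_mul_cancel₀ (hd _)])
  rw [hinv, mul_diagonal, diagonal_mul]

theorem IsHermitian.apply_swap_ne_zero (hH : A.IsHermitian) {i j : n} (hij : A i j ≠ 0) :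
    A j i ≠ 0 := by
  rwa [← hH.apply, star_ne_zero]

section PosSemidef

variable [Fintype n]

theorem PosSemidef.apply_eq_zero_of_diag_eq_zero_s9 (hA : A.PosSemidef) {i : n} (hi : A i i = 0)
    (k : n) : A i k = 0 := by
  classical
  have hcol : A *ᵥ Pi.single i 1 = 0 :=
    (hA.dotProduct_mulVec_zero_iff _).mp (by simpa [mulVec_single] using hi)
  rw [← hA.1.apply, star_eq_zero]
  simpa [mulVec_single] using congrFun hcol k

theorem PosSemidef.apply_eq_mul_of_norm_eq_one (hA : A.PosSemidef) {i j : n} (hi : A i i = 1)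
    (hj : A j j = 1) (hij : ‖A i j‖ = 1) (k : n) : A i k = A i j * A j k := by
  classical
  set x : n → 𝕜 := Pi.single i 1 - Pi.single j (A j i)
  have hphase : A j i * A i j = 1 := by
    rw [← hA.1.apply, RCLike.star_def, RCLike.conj_mul, hij]; simp
  have hx : A *ᵥ x = 0 := by
    refine (hA.dotProduct_mulVec_zero_iff x).mp ?_
    simp only [x, star_sub, Pi.star_single, star_one, mulVec_sub, mulVec_single,
      MulOpposite.op_one, one_smul, op_smul_eq_smul, smul_eq_mul, dotProduct_sub, sub_dotProduct,
      single_dotProduct, dotProduct_smul, col_apply, hi, hj, mul_one, one_mul, hA.1.apply]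
    linear_combination -hphase
  have hk : A k i = A j i * A k j := by
    simpa [x, mulVec_sub, mulVec_single, sub_eq_zero] using congrFun hx k
  rw [← hA.1.apply i k, hk, star_mul, hA.1.apply, hA.1.apply, mul_comm]

theorem PosSemidef.diag_eq_one_of_apply_ne_zero (hA : A.PosSemidef)
    (h : ∀ i j, A i j ≠ 0 → ‖A i j‖ = 1) {i j : n} (hij : A i j ≠ 0) : A i i = 1 := by
  have hii : A i i ≠ 0 := fun hi => hij (hA.apply_eq_zero_of_diag_eq_zero_s9 hi j)
  rw [← RCLike.norm_of_nonneg' hA.diag_nonneg, h i i hii, RCLike.ofReal_one]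

theorem PosSemidef.apply_eq_mul_of_apply_ne_zero (hA : A.PosSemidef)
    (h : ∀ i j, A i j ≠ 0 → ‖A i j‖ = 1) {i j : n} (hij : A i j ≠ 0) (k : n) :
    A i k = A i j * A j k :=
  hA.apply_eq_mul_of_norm_eq_one (hA.diag_eq_one_of_apply_ne_zero h hij)
    (hA.diag_eq_one_of_apply_ne_zero h (hA.1.apply_swap_ne_zero hij)) (h i j hij) k

end PosSemidef

theorem diag_eq_one_of_apply_ne_zero (hH : A.IsHermitian)
    (hmul : ∀ i j k, A i j ≠ 0 → A i k = A i j * A j k) {i j : n} (hij : A i j ≠ 0) :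
    A i i = 1 := by
  have hji := hH.apply_swap_ne_zero hij
  simpa [hji] using (hmul j i i hji).symm

theorem norm_eq_one_of_apply_ne_zero (hH : A.IsHermitian)
    (hmul : ∀ i j k, A i j ≠ 0 → A i k = A i j * A j k) {i j : n} (hij : A i j ≠ 0) :
    ‖A i j‖ = 1 := by
  have hsq : (‖A i j‖ : 𝕜) ^ 2 = 1 := by
    rw [← RCLike.mul_conj, ← RCLike.star_def, hH.apply, ← hmul i j i hij,
      diag_eq_one_of_apply_ne_zero hH hmul hij]
  exact (pow_eq_one_iff_of_nonneg (norm_nonneg _) two_ne_zero).mp (by exact_mod_cast hsq)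

theorem apply_eq_zero_of_diag_eq_zero_s9 (hH : A.IsHermitian)
    (hmul : ∀ i j k, A i j ≠ 0 → A i k = A i j * A j k) {i : n} (hi : A i i = 0) (k : n) :
    A i k = 0 := by
  by_contra hik
  simpa [hi] using diag_eq_one_of_apply_ne_zero hH hmul hik

section FirstNonzero

variable [Fintype n] [LinearOrder n]

/- Inserting `i` keeps the set nonempty and gives `firstNonzero A i ≤ i`; when `A i i ≠ 0` it
changes nothing. -/
open Classical in
noncomputable def firstNonzero (A : Matrix n n 𝕜) (i : n) : n :=
  (insert i ({j | A i j ≠ 0} : Finset n)).min' (Finset.insert_nonempty _ _)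

theorem firstNonzero_le (i : n) : firstNonzero A i ≤ i :=
  Finset.min'_le _ _ (Finset.mem_insert_self i _)

open Classical in
theorem apply_firstNonzero_ne_zero {i : n} (hi : A i i ≠ 0) : A i (firstNonzero A i) ≠ 0 := by
  have hmem : firstNonzero A i ∈ insert i ({j | A i j ≠ 0} : Finset n) := Finset.min'_mem _ _
  rw [Finset.mem_insert, Finset.mem_filter] at hmem
  rcases hmem with hfi | ⟨-, hfi⟩
  · rwa [hfi]
  · exact hfi

theorem firstNonzero_eq_of_apply_ne_zero (hH : A.IsHermitian)
    (hmul : ∀ i j k, A i j ≠ 0 → A i k = A i j * A j k) {i j : n} (hij : A i j ≠ 0) :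
    firstNonzero A i = firstNonzero A j := by
  have hsupp : ∀ {i j}, A i j ≠ 0 → ∀ k, (k = i ∨ A i k ≠ 0) → (k = j ∨ A j k ≠ 0) := by
    rintro i j hij k (rfl | hik)
    · exact Or.inr (hH.apply_swap_ne_zero hij)
    · have hji := hH.apply_swap_ne_zero hij
      exact Or.inr (by rw [hmul j i k hji]; exact mul_ne_zero hji hik)
  unfold firstNonzero
  congr 1
  ext k
  simp only [Finset.mem_insert, Finset.mem_filter, Finset.mem_univ, true_and]
  exact ⟨hsupp hij k, hsupp (hH.apply_swap_ne_zero hij) k⟩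

theorem apply_firstNonzero_mul_apply (hH : A.IsHermitian)
    (hmul : ∀ i j k, A i j ≠ 0 → A i k = A i j * A j k) (i j : n) :
    A i (firstNonzero A i) * A (firstNonzero A i) j = A i j := by
  by_cases hi : A i i = 0
  · simp [apply_eq_zero_of_diag_eq_zero_s9 hH hmul hi]
  · exact (hmul _ _ j (apply_firstNonzero_ne_zero hi)).symm

noncomputable def keepFirstNonzero (A : Matrix n n 𝕜) : Matrix n n 𝕜 :=
  of fun i j => if j = firstNonzero A i then A i j else 0

theorem keepFirstNonzero_apply_of_lt {i j : n} (hij : i < j) : keepFirstNonzero A i j = 0 :=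
  if_neg (hij.trans_le' (firstNonzero_le i)).ne'

theorem keepFirstNonzero_mul_conjTranspose (hH : A.IsHermitian)
    (hmul : ∀ i j k, A i j ≠ 0 → A i k = A i j * A j k) :
    keepFirstNonzero A * (keepFirstNonzero A)ᴴ = A := by
  ext i j
  simp only [keepFirstNonzero, mul_apply, conjTranspose_apply, of_apply, ite_mul, zero_mul,
    Finset.sum_ite_eq', Finset.mem_univ, if_true]
  split_ifs with hfij
  · rw [hH.apply, apply_firstNonzero_mul_apply hH hmul]
  · rw [star_zero, mul_zero, eq_comm]
    by_contra hij
    exact hfij (firstNonzero_eq_of_apply_ne_zero hH hmul hij)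

noncomputable def firstNonzeroPhase (A : Matrix n n 𝕜) (i : n) : 𝕜 :=
  if A i i = 0 then 1 else A i (firstNonzero A i)

theorem norm_firstNonzeroPhase (hH : A.IsHermitian)
    (hmul : ∀ i j k, A i j ≠ 0 → A i k = A i j * A j k) (i : n) :
    ‖firstNonzeroPhase A i‖ = 1 := by
  unfold firstNonzeroPhase
  split_ifs with hi
  · exact norm_one
  · exact norm_eq_one_of_apply_ne_zero hH hmul (apply_firstNonzero_ne_zero hi)

theorem inv_firstNonzeroPhase_mul_keepFirstNonzero_mul_eq_zero_or_one (hH : A.IsHermitian)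
    (hmul : ∀ i j k, A i j ≠ 0 → A i k = A i j * A j k) (i j : n) :
    (firstNonzeroPhase A i)⁻¹ * keepFirstNonzero A i j * firstNonzeroPhase A j = 0 ∨
      (firstNonzeroPhase A i)⁻¹ * keepFirstNonzero A i j * firstNonzeroPhase A j = 1 := by
  simp only [keepFirstNonzero, of_apply]
  split_ifs with hj
  · subst hj
    by_cases hij : A i (firstNonzero A i) = 0
    · simp [hij]
    have hii : A i i ≠ 0 := by simp [diag_eq_one_of_apply_ne_zero hH hmul hij]
    have hjj := diag_eq_one_of_apply_ne_zero hH hmul (hH.apply_swap_ne_zero hij)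
    have hfj := (firstNonzero_eq_of_apply_ne_zero hH hmul hij).symm
    simp [firstNonzeroPhase, hii, hjj, hfj, inv_mul_cancel₀ hij]
  · simp

end FirstNonzero

end Matrix

/-- A Hermitian positive semidefinite matrix whose nonzero entries all have modulus `1`
admits a Cholesky factorization `A = L L*` with `L` lower triangular such that
`D⁻¹ L D` is a `(0,1)`-matrix for some unitary diagonal matrix `D`. -/
theorem stmt9 (n : ℕ) (A : Matrix (Fin n) (Fin n) ℂ) (hA : A.PosSemidef)
    (h : ∀ i j, A i j ≠ 0 → ‖A i j‖ = 1) :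
    ∃ L : Matrix (Fin n) (Fin n) ℂ,
      (∀ i j : Fin n, i < j → L i j = 0) ∧ A = L * Lᴴ ∧
      ∃ d : Fin n → ℂ, (∀ i, ‖d i‖ = 1) ∧
        (∀ i j, ((Matrix.diagonal d)⁻¹ * L * Matrix.diagonal d) i j = 0 ∨
                ((Matrix.diagonal d)⁻¹ * L * Matrix.diagonal d) i j = 1) := by
  have hmul : ∀ i j k, A i j ≠ 0 → A i k = A i j * A j k := fun i j k hij =>
    hA.apply_eq_mul_of_apply_ne_zero h hij k
  have hd := Matrix.norm_firstNonzeroPhase hA.1 hmul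
  refine ⟨A.keepFirstNonzero, fun i j => Matrix.keepFirstNonzero_apply_of_lt,
    (Matrix.keepFirstNonzero_mul_conjTranspose hA.1 hmul).symm, A.firstNonzeroPhase, hd,
    fun i j => ?_⟩
  rw [Matrix.inv_diagonal_mul_mul_diagonal_apply fun i => norm_ne_zero_iff.mp (by simp [hd i])]
  exact Matrix.inv_firstNonzeroPhase_mul_keepFirstNonzero_mul_eq_zero_or_one hA.1 hmul i j
end
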